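/- Let (A, B) be a co-t-structure on a triangulated category T with co-heart S = A ∩ Σ⁻¹B. Then S * ΣS is closed under extensions and under direct summands. -/

import Mathlib

open CategoryTheory Category Limits Pretriangulated

variable {C : Type*} [Category C] [Preadditive C] [HasZeroObject C] [HasShift C ℤ]
  [∀ n : ℤ, (shiftFunctor C n).Additive] [Pretriangulated C]

/-- A co-t-structure on a triangulated category: a pair of full subcategories (given by
their classes of objects) closed under direct summands, with `Σ⁻¹A ⊆ A`, `ΣB ⊆ B`,
`Hom(A, B) = 0`, and every object sitting in a triangle `a → t → b → Σa`. -/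
structure CoTStructure (A B : Set C) : Prop where
  summandA : ∀ x y : C, (∃ (i : x ⟶ y) (r : y ⟶ x), i ≫ r = 𝟙 x) → y ∈ A → x ∈ A
  summandB : ∀ x y : C, (∃ (i : x ⟶ y) (r : y ⟶ x), i ≫ r = 𝟙 x) → y ∈ B → x ∈ B
  shiftA : ∀ x ∈ A, x⟦(-1 : ℤ)⟧ ∈ A
  shiftB : ∀ x ∈ B, x⟦(1 : ℤ)⟧ ∈ B
  orth : ∀ a ∈ A, ∀ b ∈ B, ∀ f : a ⟶ b, f = 0
  tri : ∀ t : C, ∃ (a b : C) (_ : a ∈ A) (_ : b ∈ B) (f : a ⟶ t) (g : t ⟶ b)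
    (h : b ⟶ a⟦(1 : ℤ)⟧), Triangle.mk f g h ∈ distTriang C

/-- The co-heart `A ∩ Σ⁻¹B` of a co-t-structure. -/
def coheart (A B : Set C) : Set C := {x | x ∈ A ∧ x⟦(1 : ℤ)⟧ ∈ B}

/-- `S * T`: objects `e` admitting a distinguished triangle `s → e → t → Σs`
with `s ∈ S`, `t ∈ T`. -/
def starSet (S T : Set C) : Set C :=
  {e | ∃ (s t : C) (_ : s ∈ S) (_ : t ∈ T) (f : s ⟶ e) (g : e ⟶ t)
    (h : t ⟶ s⟦(1 : ℤ)⟧), Triangle.mk f g h ∈ distTriang C}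

/-- `ΣS`, described as those `x` with `Σ⁻¹x ∈ S`. -/
def shiftSet (S : Set C) : Set C := {x | x⟦(-1 : ℤ)⟧ ∈ S}

/-- `S * ΣS`: objects `t` admitting a distinguished triangle `s₁ → s₀ → t → Σs₁`
with `s₀, s₁ ∈ S`. -/
def twoTermSet (S : Set C) : Set C :=
  {t | ∃ (s₁ s₀ : C) (_ : s₁ ∈ S) (_ : s₀ ∈ S) (f : s₁ ⟶ s₀) (g : s₀ ⟶ t)
    (h : t ⟶ s₁⟦(1 : ℤ)⟧), Triangle.mk f g h ∈ distTriang C}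

/-!
`S * ΣS` is exactly the class of objects `t` with `Σ⁻¹t ∈ A` and `Σt ∈ B`. Splitting the
decomposition triangle of an object shows that `A` contains everything left orthogonal to `B`
and `B` everything right orthogonal to `A`; orthogonals are closed under extensions, so `A` and
`B` are. Since shifting preserves distinguished triangles and retracts, both conditions on `t`
are closed under extensions and summands.
-/

namespace CoTStructure

variable {A B : Set C}

lemma mem_A_of_forall_eq_zero (h : CoTStructure A B) {x : C}
    (hx : ∀ b ∈ B, ∀ f : x ⟶ b, f = 0) : x ∈ A := by
  obtain ⟨a, b, ha, hb, f, g, w, hT⟩ := h.tri x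
  obtain ⟨r, hr⟩ := Triangle.coyoneda_exact₂ _ hT (𝟙 x) ((id_comp g).trans (hx b hb g))
  exact h.summandA x a ⟨r, f, hr.symm⟩ ha

lemma mem_B_of_forall_eq_zero (h : CoTStructure A B) {x : C}
    (hx : ∀ a ∈ A, ∀ f : a ⟶ x, f = 0) : x ∈ B := by
  obtain ⟨a, b, ha, hb, f, g, w, hT⟩ := h.tri x
  obtain ⟨r, hr⟩ := Triangle.yoneda_exact₂ _ hT (𝟙 x) ((comp_id f).trans (hx a ha f))
  exact h.summandB x b ⟨g, r, hr.symm⟩ hb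

lemma mem_A_of_distTriang (h : CoTStructure A B) {T : Triangle C} (hT : T ∈ distTriang C)
    (h₁ : T.obj₁ ∈ A) (h₃ : T.obj₃ ∈ A) : T.obj₂ ∈ A := by
  refine h.mem_A_of_forall_eq_zero fun b hb φ => ?_
  obtain ⟨ψ, rfl⟩ := Triangle.yoneda_exact₂ _ hT φ (h.orth _ h₁ b hb _)
  rw [h.orth _ h₃ b hb ψ, comp_zero]

lemma mem_B_of_distTriang (h : CoTStructure A B) {T : Triangle C} (hT : T ∈ distTriang C)
    (h₁ : T.obj₁ ∈ B) (h₃ : T.obj₃ ∈ B) : T.obj₂ ∈ B := by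
  refine h.mem_B_of_forall_eq_zero fun a ha φ => ?_
  obtain ⟨ψ, rfl⟩ := Triangle.coyoneda_exact₂ _ hT φ (h.orth a ha _ h₃ _)
  rw [h.orth a ha _ h₁ ψ, zero_comp]

lemma mem_twoTermSet_coheart_iff (h : CoTStructure A B) (t : C) :
    t ∈ twoTermSet (coheart A B) ↔ t⟦(-1 : ℤ)⟧ ∈ A ∧ t⟦(1 : ℤ)⟧ ∈ B := by
  constructor
  · rintro ⟨s₁, s₀, ⟨hs₁A, hs₁B⟩, ⟨hs₀A, hs₀B⟩, f, g, w, hT⟩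
    exact ⟨h.mem_A_of_distTriang (inv_rot_of_distTriang _ (inv_rot_of_distTriang _ hT))
        (h.shiftA _ hs₀A) hs₁A,
      h.mem_B_of_distTriang (Triangle.shift_distinguished _ (rot_of_distTriang _ hT) 1)
        hs₀B (h.shiftB _ hs₁B)⟩
  · rintro ⟨htA, htB⟩
    obtain ⟨a, b, ha, hb, f, g, w, hT⟩ := h.tri t
    -- The witness is the inverse rotation `Σ⁻¹b → a → t → ΣΣ⁻¹b` of the decomposition of `t`.
    have hbA : b⟦(-1 : ℤ)⟧ ∈ A :=
      h.mem_A_of_distTriang (inv_rot_of_distTriang _ (inv_rot_of_distTriang _ hT)) htA ha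
    have hbB : b⟦(-1 : ℤ)⟧⟦(1 : ℤ)⟧ ∈ B :=
      let e := (shiftFunctorCompIsoId C (-1 : ℤ) 1 (by norm_num)).app b
      h.summandB _ b ⟨e.hom, e.inv, e.hom_inv_id⟩ hb
    have haB : a⟦(1 : ℤ)⟧ ∈ B :=
      h.mem_B_of_distTriang (rot_of_distTriang _ (rot_of_distTriang _ hT)) hb htB
    exact ⟨_, a, ⟨hbA, hbB⟩, ⟨ha, haB⟩, _, _, _, inv_rot_of_distTriang _ hT⟩

end CoTStructure

/-- For a co-t-structure `(A, B)` with co-heart `S`, the subcategory `S * ΣS` is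
closed under extensions and direct summands. -/
theorem stmt_3 (A B : Set C) (h : CoTStructure A B) :
    (∀ (x y z : C) (f : x ⟶ y) (g : y ⟶ z) (w : z ⟶ x⟦(1 : ℤ)⟧),
      Triangle.mk f g w ∈ (distTriang C) →
      x ∈ twoTermSet (coheart A B) → z ∈ twoTermSet (coheart A B) →
      y ∈ twoTermSet (coheart A B)) ∧
    (∀ x y : C, (∃ (i : x ⟶ y) (r : y ⟶ x), i ≫ r = 𝟙 x) →
      y ∈ twoTermSet (coheart A B) → x ∈ twoTermSet (coheart A B)) := by
  simp only [h.mem_twoTermSet_coheart_iff]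
  constructor
  · intro x y z f g w hT ⟨hxA, hxB⟩ ⟨hzA, hzB⟩
    exact ⟨h.mem_A_of_distTriang (Triangle.shift_distinguished _ hT (-1)) hxA hzA,
      h.mem_B_of_distTriang (Triangle.shift_distinguished _ hT 1) hxB hzB⟩
  · rintro x y ⟨i, r, hir⟩ ⟨hyA, hyB⟩
    let e : Retract x y := ⟨i, r, hir⟩
    exact ⟨h.summandA _ _ ⟨_, _, (e.map (shiftFunctor C (-1 : ℤ))).retract⟩ hyA,
      h.summandB _ _ ⟨_, _, (e.map (shiftFunctor C (1 : ℤ))).retract⟩ hyB⟩
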